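/- Let 𝕂 be ℝ or ℂ, V a finite-dimensional 𝕂-vector space, S : V × V → 𝕂 a symmetric bilinear map and Ŝ : V³ → 𝕂 a symmetric trilinear map (invariant under all permutations of its arguments). Define the 5-linear maps S⊗Ŝ : (v₁,…,v₅) ↦ S(v₁,v₂)·Ŝ(v₃,v₄,v₅) and Ŝ⊗S : (v₁,…,v₅) ↦ Ŝ(v₁,v₂,v₃)·S(v₄,v₅). Then y_{t'}*(S⊗Ŝ) = y_{t'}*(Ŝ⊗S), and both equal the 5-linear map (w,x,y,z,u) ↦ 4·( S(w,z)·Ŝ(x,y,u) − S(x,z)·Ŝ(w,y,u) + S(x,y)·Ŝ(w,z,u) − S(w,y)·Ŝ(x,z,u) ). -/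

import Mathlib

/-- The action of a group-algebra element `a ∈ 𝕂[S_r]` on an `r`-linear map:
`(aT)(v₁,…,v_r) = Σ_p a(p)·T(v_{p(1)},…,v_{p(r)})`. -/
noncomputable def gaAct {𝕂 : Type*} [RCLike 𝕂] {V : Type*} [AddCommGroup V] [Module 𝕂 V]
    {r : ℕ} (a : MonoidAlgebra 𝕂 (Equiv.Perm (Fin r)))
    (T : MultilinearMap 𝕂 (fun _ : Fin r => V) 𝕂) :
    MultilinearMap 𝕂 (fun _ : Fin r => V) 𝕂 :=
  ∑ p : Equiv.Perm (Fin r), a.coeff p • T.domDomCongr p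

/-- The star map `a = Σ_p a(p)·p ↦ a* = Σ_p a(p)·p⁻¹` on the group algebra. -/
noncomputable def gaStar {𝕂 : Type*} [RCLike 𝕂] {r : ℕ}
    (a : MonoidAlgebra 𝕂 (Equiv.Perm (Fin r))) : MonoidAlgebra 𝕂 (Equiv.Perm (Fin r)) :=
  ∑ p : Equiv.Perm (Fin r), MonoidAlgebra.single p⁻¹ (a.coeff p)

/-- The horizontal group `H_{t'}` of the tableau `t'` with rows `(1,3,5)` and `(2,4)`
(0-based: rows `{0,2,4}` and `{1,3}`): all permutations mapping each row to itself. -/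
def horizT' : Finset (Equiv.Perm (Fin 5)) :=
  Finset.univ.filter fun p =>
    (∀ i ∈ ({0, 2, 4} : Finset (Fin 5)), p i ∈ ({0, 2, 4} : Finset (Fin 5))) ∧
    (∀ i ∈ ({1, 3} : Finset (Fin 5)), p i ∈ ({1, 3} : Finset (Fin 5)))

/-- The vertical group `V_{t'}` of `t'`: all permutations mapping each of the columns
`{1,2}` and `{3,4}` (0-based `{0,1}`, `{2,3}`) to itself and fixing `5` (0-based `4`). -/
def vertT' : Finset (Equiv.Perm (Fin 5)) :=
  Finset.univ.filter fun p =>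
    (∀ i ∈ ({0, 1} : Finset (Fin 5)), p i ∈ ({0, 1} : Finset (Fin 5))) ∧
    (∀ i ∈ ({2, 3} : Finset (Fin 5)), p i ∈ ({2, 3} : Finset (Fin 5))) ∧
    p 4 = 4

/-- The Young symmetrizer `y_{t'} = Σ_{p∈H_{t'}} Σ_{q∈V_{t'}} sign(q)·(p∘q)`. -/
noncomputable def youngT' (𝕂 : Type*) [RCLike 𝕂] : MonoidAlgebra 𝕂 (Equiv.Perm (Fin 5)) :=
  ∑ p ∈ horizT', ∑ q ∈ vertT',
    MonoidAlgebra.single (p * q) (((Equiv.Perm.sign q : ℤ) : 𝕂))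


/-! Unwinding the star, `y_{t'}*` sends `T` to
`v ↦ Σ_{p ∈ H_{t'}} Σ_{q ∈ V_{t'}} sign(q) T(v ∘ (p q)⁻¹)`. With `|H_{t'}| = 12` and
`|V_{t'}| = 4` this is an explicit sum of 48 terms for either tensor product; once the arguments
of `S` and `Ŝ` are sorted using their symmetry, it collapses to the four displayed terms, each
with coefficient 4. -/

open Equiv Finset

section GroupAlgebraAction

variable {𝕂 : Type*} [RCLike 𝕂] {V : Type*} [AddCommGroup V] [Module 𝕂 V] {r : ℕ}

theorem gaAct_apply (a : MonoidAlgebra 𝕂 (Perm (Fin r)))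
    (T : MultilinearMap 𝕂 (fun _ : Fin r => V) 𝕂) (v : Fin r → V) :
    gaAct a T v = ∑ p : Perm (Fin r), a.coeff p * T (fun i => v (p i)) := by
  simp [gaAct]

theorem gaStar_coeff (a : MonoidAlgebra 𝕂 (Perm (Fin r))) (g : Perm (Fin r)) :
    (gaStar a).coeff g = a.coeff g⁻¹ := by
  simp only [gaStar, MonoidAlgebra.coeff_sum, sum_apply', MonoidAlgebra.coeff_single,
    Finsupp.single_apply, inv_eq_iff_eq_inv]
  simp

theorem gaAct_gaStar_apply (a : MonoidAlgebra 𝕂 (Perm (Fin r)))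
    (T : MultilinearMap 𝕂 (fun _ : Fin r => V) 𝕂) (v : Fin r → V) :
    gaAct (gaStar a) T v = ∑ p : Perm (Fin r), a.coeff p * T (fun i => v (p⁻¹ i)) := by
  simp only [gaAct_apply, gaStar_coeff]
  exact Fintype.sum_equiv (Equiv.inv _) _ _ fun p => by simp

theorem gaAct_gaStar_sum_single {ι : Type*} (s : Finset ι) (g : ι → Perm (Fin r)) (c : ι → 𝕂)
    (T : MultilinearMap 𝕂 (fun _ : Fin r => V) 𝕂) (v : Fin r → V) :
    gaAct (gaStar (∑ i ∈ s, MonoidAlgebra.single (g i) (c i))) T v =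
      ∑ i ∈ s, c i * T (fun j => v ((g i)⁻¹ j)) := by
  simp only [gaAct_gaStar_apply, MonoidAlgebra.coeff_sum, sum_apply',
    MonoidAlgebra.coeff_single, Finsupp.single_apply, sum_mul, ite_mul, zero_mul]
  rw [sum_comm]
  simp

theorem gaAct_gaStar_youngT'_apply (T : MultilinearMap 𝕂 (fun _ : Fin 5 => V) 𝕂)
    (v : Fin 5 → V) :
    gaAct (gaStar (youngT' 𝕂)) T v =
      ∑ p ∈ horizT', ∑ q ∈ vertT', (Perm.sign q : 𝕂) * T (fun i => v (q⁻¹ (p⁻¹ i))) := by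
  rw [youngT', ← sum_product', gaAct_gaStar_sum_single, sum_product]
  simp

end GroupAlgebraAction

section TableauGroups

theorem horizT'_eq : horizT' = {1, swap 0 2, swap 0 4, swap 2 4, swap 0 2 * swap 2 4,
    swap 2 4 * swap 0 2, swap 1 3, swap 0 2 * swap 1 3, swap 0 4 * swap 1 3,
    swap 2 4 * swap 1 3, swap 0 2 * swap 2 4 * swap 1 3, swap 2 4 * swap 0 2 * swap 1 3} := by
  decide

theorem vertT'_eq : vertT' = {1, swap 0 1, swap 2 3, swap 0 1 * swap 2 3} := by
  decide

theorem sum_horizT' {M : Type*} [AddCommMonoid M] (f : Perm (Fin 5) → M) :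
    ∑ p ∈ horizT', f p =
      f 1 + f (swap 0 2) + f (swap 0 4) + f (swap 2 4) + f (swap 0 2 * swap 2 4)
        + f (swap 2 4 * swap 0 2) + f (swap 1 3) + f (swap 0 2 * swap 1 3)
        + f (swap 0 4 * swap 1 3) + f (swap 2 4 * swap 1 3) + f (swap 0 2 * swap 2 4 * swap 1 3)
        + f (swap 2 4 * swap 0 2 * swap 1 3) := by
  rw [horizT'_eq]
  repeat rw [sum_insert (by decide)]
  simp only [sum_singleton, add_assoc]

theorem sum_vertT'_sign_mul {R : Type*} [CommRing R] (f : Perm (Fin 5) → R) :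
    ∑ q ∈ vertT', (Perm.sign q : R) * f q =
      f 1 - f (swap 0 1) - f (swap 2 3) + f (swap 0 1 * swap 2 3) := by
  rw [vertT'_eq, sum_insert (by decide), sum_insert (by decide), sum_pair (by decide)]
  simp
  ring

end TableauGroups

section SymmetricFunctionOfThree

variable {V R : Type*} {f : (Fin 3 → V) → R}

theorem apply_vec_three_comm_left
    (hf : ∀ (σ : Perm (Fin 3)) (v : Fin 3 → V), f (fun i => v (σ i)) = f v) (a b c : V) :
    f ![b, a, c] = f ![a, b, c] := by
  convert hf (swap 0 1) ![a, b, c] using 2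
  funext i
  fin_cases i <;> rfl

theorem apply_vec_three_comm_right
    (hf : ∀ (σ : Perm (Fin 3)) (v : Fin 3 → V), f (fun i => v (σ i)) = f v) (a b c : V) :
    f ![a, c, b] = f ![a, b, c] := by
  convert hf (swap 1 2) ![a, b, c] using 2
  funext i
  fin_cases i <;> rfl

end SymmetricFunctionOfThree

section TensorProducts

variable {𝕂 : Type*} [RCLike 𝕂] {V : Type*} [AddCommGroup V] [Module 𝕂 V]

theorem gaAct_gaStar_youngT'_of_S_tensor_Shat (S : MultilinearMap 𝕂 (fun _ : Fin 2 => V) 𝕂)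
    (hS : ∀ x y : V, S ![x, y] = S ![y, x]) (Shat : MultilinearMap 𝕂 (fun _ : Fin 3 => V) 𝕂)
    (hShat : ∀ (σ : Perm (Fin 3)) (v : Fin 3 → V), Shat (fun i => v (σ i)) = Shat v)
    (T : MultilinearMap 𝕂 (fun _ : Fin 5 => V) 𝕂)
    (hT : ∀ v : Fin 5 → V, T v = S ![v 0, v 1] * Shat ![v 2, v 3, v 4]) (v : Fin 5 → V) :
    gaAct (gaStar (youngT' 𝕂)) T v =
      4 * (S ![v 0, v 3] * Shat ![v 1, v 2, v 4] - S ![v 1, v 3] * Shat ![v 0, v 2, v 4]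
        + S ![v 1, v 2] * Shat ![v 0, v 3, v 4] - S ![v 0, v 2] * Shat ![v 1, v 3, v 4]) := by
  rw [gaAct_gaStar_youngT'_apply]
  simp only [sum_horizT', sum_vertT'_sign_mul, hT, mul_inv_rev, swap_inv, inv_one,
    Perm.mul_apply, Perm.one_apply, swap_apply_def]
  simp only [Fin.isValue, Fin.reduceEq, reduceIte]
  -- these are permutative simp lemmas: they sort the arguments of `S` and `Shat`
  simp only [hS, apply_vec_three_comm_left hShat, apply_vec_three_comm_right hShat]
  ring

theorem gaAct_gaStar_youngT'_of_Shat_tensor_S (S : MultilinearMap 𝕂 (fun _ : Fin 2 => V) 𝕂)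
    (hS : ∀ x y : V, S ![x, y] = S ![y, x]) (Shat : MultilinearMap 𝕂 (fun _ : Fin 3 => V) 𝕂)
    (hShat : ∀ (σ : Perm (Fin 3)) (v : Fin 3 → V), Shat (fun i => v (σ i)) = Shat v)
    (T : MultilinearMap 𝕂 (fun _ : Fin 5 => V) 𝕂)
    (hT : ∀ v : Fin 5 → V, T v = Shat ![v 0, v 1, v 2] * S ![v 3, v 4]) (v : Fin 5 → V) :
    gaAct (gaStar (youngT' 𝕂)) T v =
      4 * (S ![v 0, v 3] * Shat ![v 1, v 2, v 4] - S ![v 1, v 3] * Shat ![v 0, v 2, v 4]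
        + S ![v 1, v 2] * Shat ![v 0, v 3, v 4] - S ![v 0, v 2] * Shat ![v 1, v 3, v 4]) := by
  rw [gaAct_gaStar_youngT'_apply]
  simp only [sum_horizT', sum_vertT'_sign_mul, hT, mul_inv_rev, swap_inv, inv_one,
    Perm.mul_apply, Perm.one_apply, swap_apply_def]
  simp only [Fin.isValue, Fin.reduceEq, reduceIte]
  simp only [hS, apply_vec_three_comm_left hShat, apply_vec_three_comm_right hShat]
  ring

end TensorProducts

theorem stmt2 {𝕂 : Type*} [RCLike 𝕂] {V : Type*} [AddCommGroup V] [Module 𝕂 V]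
    (S : MultilinearMap 𝕂 (fun _ : Fin 2 => V) 𝕂)
    (hS : ∀ x y : V, S ![x, y] = S ![y, x])
    (Shat : MultilinearMap 𝕂 (fun _ : Fin 3 => V) 𝕂)
    (hShat : ∀ (σ : Equiv.Perm (Fin 3)) (v : Fin 3 → V), Shat (fun i => v (σ i)) = Shat v)
    (T₁ T₂ : MultilinearMap 𝕂 (fun _ : Fin 5 => V) 𝕂)
    (hT₁ : ∀ v : Fin 5 → V, T₁ v = S ![v 0, v 1] * Shat ![v 2, v 3, v 4])
    (hT₂ : ∀ v : Fin 5 → V, T₂ v = Shat ![v 0, v 1, v 2] * S ![v 3, v 4]) :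
    gaAct (gaStar (youngT' 𝕂)) T₁ = gaAct (gaStar (youngT' 𝕂)) T₂ ∧
    ∀ w x y z u : V,
      gaAct (gaStar (youngT' 𝕂)) T₁ ![w, x, y, z, u] =
        4 * (S ![w, z] * Shat ![x, y, u] - S ![x, z] * Shat ![w, y, u]
          + S ![x, y] * Shat ![w, z, u] - S ![w, y] * Shat ![x, z, u]) := by
  have h₁ := gaAct_gaStar_youngT'_of_S_tensor_Shat S hS Shat hShat T₁ hT₁
  have h₂ := gaAct_gaStar_youngT'_of_Shat_tensor_S S hS Shat hShat T₂ hT₂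
  refine ⟨MultilinearMap.ext fun v => by rw [h₁, h₂], fun w x y z u => ?_⟩
  simpa using h₁ ![w, x, y, z, u]
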